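/- Let q be a 2way-determined query and D a clique-database for q. Then D ⊨ certain(q) if and only if the bipartite graph H(D,q) admits no matching saturating the set of blocks of D. -/

import Mathlib

/- Consistent query answering framework: a single relation symbol of arity `n`
   whose first `l` positions form the primary key. Facts are `Fin n → Elem`,
   atoms are `Fin n → Var`. -/

namespace CQA

/-- Key-equality: the tuples of the first `l` entries coincide. -/
def keyEq (l : ℕ) {n : ℕ} {α : Type*} (s t : Fin n → α) : Prop :=
  ∀ i : Fin n, (i : ℕ) < l → s i = t i

/-- The set of entries occurring in the first `l` (key) positions of a tuple. -/
def keySet (l : ℕ) {n : ℕ} {α : Type*} (t : Fin n → α) : Set α :=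
  {x | ∃ i : Fin n, (i : ℕ) < l ∧ t i = x}

/-- The set of all entries of a tuple. -/
def varsSet {n : ℕ} {α : Type*} (t : Fin n → α) : Set α :=
  Set.range t

/-- A (two-atom, Boolean, self-join) query `q = AB` is a pair of atoms. -/
abbrev Query (n : ℕ) (Var : Type*) := (Fin n → Var) × (Fin n → Var)

variable {n : ℕ} {Elem Var : Type*}

/-- The pair of facts `(a, b)` matches the two atoms of `q` via a single assignment `μ`. -/
def solPair (q : Query n Var) (a b : Fin n → Elem) : Prop :=
  ∃ μ : Var → Elem, (∀ i, μ (q.1 i) = a i) ∧ (∀ i, μ (q.2 i) = b i)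

/-- `D ⊨ q(ab)` : `(a,b)` is a solution to `q` in `D`. -/
def Sol (q : Query n Var) (D : Set (Fin n → Elem)) (a b : Fin n → Elem) : Prop :=
  a ∈ D ∧ b ∈ D ∧ solPair q a b

/-- `D ⊨ q{ab}` : `(a,b)` or `(b,a)` is a solution to `q` in `D`. -/
def SolSym (q : Query n Var) (D : Set (Fin n → Elem)) (a b : Fin n → Elem) : Prop :=
  Sol q D a b ∨ Sol q D b a

/-- The set `q(D)` of solutions to `q` in `D`. -/
def solSet (q : Query n Var) (D : Set (Fin n → Elem)) :
    Set ((Fin n → Elem) × (Fin n → Elem)) :=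
  {p | Sol q D p.1 p.2}

/-- `D ⊨ q` : some solution to `q` exists in `D`. -/
def Sat (q : Query n Var) (D : Set (Fin n → Elem)) : Prop :=
  ∃ a b, Sol q D a b

/-- A database is consistent if it contains no two distinct key-equal facts. -/
def Consistent (l : ℕ) (D : Set (Fin n → Elem)) : Prop :=
  ∀ a ∈ D, ∀ b ∈ D, keyEq l a b → a = b

/-- `r` is a repair of `D` : a maximal consistent subset of `D`. -/
def Repair (l : ℕ) (D r : Set (Fin n → Elem)) : Prop :=
  r ⊆ D ∧ Consistent l r ∧ ∀ s, r ⊆ s → s ⊆ D → Consistent l s → s = r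

/-- `D ⊨ certain(q)` : all repairs of `D` satisfy `q`. -/
def Certain (l : ℕ) (q : Query n Var) (D : Set (Fin n → Elem)) : Prop :=
  ∀ r, Repair l D r → Sat q r

/-- The block of the fact `a` in `D`: all facts of `D` key-equal to `a`. -/
def Block (l : ℕ) (D : Set (Fin n → Elem)) (a : Fin n → Elem) : Set (Fin n → Elem) :=
  {b ∈ D | keyEq l a b}

/-- A `k`-set of `D`: at most `k` facts of `D`, at most one from each block. -/
def kSet (l k : ℕ) (D S : Set (Fin n → Elem)) : Prop :=
  S ⊆ D ∧ S.Finite ∧ S.ncard ≤ k ∧ Consistent l S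

/-- A collection `𝒮` of sets of facts is closed under the two rules defining `Δ_k(q,D)`:
  (i) every `k`-set satisfying `q` is in `𝒮`, and (ii) if for a `k`-set `S` there is
  a block of `D` each of whose facts `u` admits a subset `S' ⊆ S ∪ {u}` that is a
  `k`-set belonging to `𝒮`, then `S ∈ 𝒮`. -/
def DeltaClosed (l k : ℕ) (q : Query n Var) (D : Set (Fin n → Elem))
    (𝒮 : Set (Set (Fin n → Elem))) : Prop :=
  (∀ S, kSet l k D S → Sat q S → S ∈ 𝒮) ∧
  (∀ S, kSet l k D S → (∃ x ∈ D, ∀ u ∈ D, keyEq l x u →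
      ∃ S', S' ⊆ S ∪ {u} ∧ kSet l k D S' ∧ S' ∈ 𝒮) → S ∈ 𝒮)

/-- `Δ_k(q,D)`: the least collection of `k`-sets of `D` closed under the two rules
(the intersection of all closed collections). -/
def Delta (l k : ℕ) (q : Query n Var) (D : Set (Fin n → Elem)) :
    Set (Set (Fin n → Elem)) :=
  ⋂₀ {𝒮 | DeltaClosed l k q D 𝒮}

/-- `q = AB` is 2way-determined. -/
def TwoWayDet (l : ℕ) (q : Query n Var) : Prop :=
  ¬ keySet l q.1 ⊆ keySet l q.2 ∧ ¬ keySet l q.2 ⊆ keySet l q.1 ∧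
  keySet l q.1 ⊆ varsSet q.2 ∧ keySet l q.2 ⊆ varsSet q.1

/-- The zig-zag property of a query `q`, relative to databases over `Elem`. -/
def ZigZag (l : ℕ) (q : Query n Var) (Elem : Type*) : Prop :=
  ∀ D : Set (Fin n → Elem), D.Finite →
    ∀ a b b' c : Fin n → Elem, a ∈ D → b ∈ D → b' ∈ D → c ∈ D →
      ¬ keyEq l a c → a ≠ b → keyEq l b b' →
      Sol q D a b → Sol q D c b' → Sol q D a b'

/-- `rkey(a, r)`: facts of `r` whose key entries are included in those of `a`. -/
def rkey (l : ℕ) (r : Set (Fin n → Elem)) (a : Fin n → Elem) : Set (Fin n → Elem) :=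
  {c ∈ r | keySet l c ⊆ keySet l a}

open Classical in
/-- `g(e)`, the set of entries of the tuple `g̅(e)`, for `e` branching with `d, f`. -/
noncomputable def gSet (l : ℕ) (d e f : Fin n → Elem) : Set Elem :=
  if keySet l d ⊆ keySet l e ∧ ¬ keySet l f ⊆ keySet l e then keySet l d
  else if ¬ keySet l d ⊆ keySet l e ∧ keySet l f ⊆ keySet l e then keySet l f
  else if keySet l d ⊆ keySet l f ∧ keySet l f ⊆ keySet l e then keySet l d
  else if keySet l f ⊆ keySet l d ∧ keySet l d ⊆ keySet l e then keySet l f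
  else keySet l e

/-- A tripath of `q`: a database `Θ`, each of whose blocks has at most two facts,
whose blocks (indexed by `Fin m`) are arranged as a rooted tree with exactly one root
block and exactly two leaf blocks; the root block has the single fact `a(root)`, leaf
blocks have the single fact `b(leaf)`, all other blocks have exactly the two facts
`a(B) ≠ b(B)`; if `B` is the parent of `B'` then `Θ ⊨ q{a(B) b(B')}`; the (unique)
branching block `B` with its two children `B', B''` gives the center `d e f` =
`b(B') a(B) b(B'')` with `(d,e)` and `(e,f)` distinct solutions; and `g(e)` is not
included in the key of the root fact nor of either leaf fact. -/
structure Tripath (l : ℕ) (q : Query n Var) (Θ : Set (Fin n → Elem)) where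
  finite : Θ.Finite
  m : ℕ
  blk : Fin m → Set (Fin n → Elem)
  blk_is_block : ∀ i, ∃ x ∈ Θ, blk i = Block l Θ x
  blk_cover : Θ = ⋃ i, blk i
  blk_inj : Function.Injective blk
  blk_card : ∀ i, (blk i).ncard ≤ 2
  parent : Fin m → Option (Fin m)
  root : Fin m
  parent_root : parent root = none
  parent_ne_root : ∀ i, i ≠ root → ∃ j, parent i = some j
  reach_root : ∀ i, Relation.ReflTransGen (fun x y => parent x = some y) i root
  leaf1 : Fin m
  leaf2 : Fin m
  leaf_ne : leaf1 ≠ leaf2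
  leaf1_leaf : ∀ j, parent j ≠ some leaf1
  leaf2_leaf : ∀ j, parent j ≠ some leaf2
  leaves_eq : ∀ i, (∀ j, parent j ≠ some i) → i = leaf1 ∨ i = leaf2
  aFact : Fin m → (Fin n → Elem)
  bFact : Fin m → (Fin n → Elem)
  root_blk : blk root = {aFact root}
  leaf1_blk : blk leaf1 = {bFact leaf1}
  leaf2_blk : blk leaf2 = {bFact leaf2}
  other_blk : ∀ i, i ≠ root → i ≠ leaf1 → i ≠ leaf2 →
    aFact i ≠ bFact i ∧ blk i = {aFact i, bFact i}
  adj_sol : ∀ i j, parent j = some i → SolSym q Θ (aFact i) (bFact j)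
  branch : Fin m
  child1 : Fin m
  child2 : Fin m
  child_ne : child1 ≠ child2
  parent_child1 : parent child1 = some branch
  parent_child2 : parent child2 = some branch
  center_sol1 : Sol q Θ (bFact child1) (aFact branch)
  center_sol2 : Sol q Θ (aFact branch) (bFact child2)
  center_distinct : (bFact child1, aFact branch) ≠ (aFact branch, bFact child2)
  g_root : ¬ gSet l (bFact child1) (aFact branch) (bFact child2) ⊆ keySet l (aFact root)
  g_leaf1 : ¬ gSet l (bFact child1) (aFact branch) (bFact child2) ⊆ keySet l (bFact leaf1)
  g_leaf2 : ¬ gSet l (bFact child1) (aFact branch) (bFact child2) ⊆ keySet l (bFact leaf2)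

namespace Tripath

variable {l : ℕ} {q : Query n Var} {Θ : Set (Fin n → Elem)}

/-- The fact `d` of the center `def` of a tripath. -/
def dc (T : Tripath l q Θ) : Fin n → Elem := T.bFact T.child1
/-- The fact `e` of the center `def` of a tripath. -/
def ec (T : Tripath l q Θ) : Fin n → Elem := T.aFact T.branch
/-- The fact `f` of the center `def` of a tripath. -/
def fc (T : Tripath l q Θ) : Fin n → Elem := T.bFact T.child2
/-- The root fact `u₀` of a tripath. -/
def u0 (T : Tripath l q Θ) : Fin n → Elem := T.aFact T.root
/-- The leaf fact `u₁` of a tripath. -/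
def u1 (T : Tripath l q Θ) : Fin n → Elem := T.bFact T.leaf1
/-- The leaf fact `u₂` of a tripath. -/
def u2 (T : Tripath l q Θ) : Fin n → Elem := T.bFact T.leaf2

/-- The center of the tripath is a fork (`(f,d)` is not a solution). -/
def IsFork (T : Tripath l q Θ) : Prop := ¬ Sol q Θ T.fc T.dc

/-- The center of the tripath is a triangle (`(f,d)` is a solution). -/
def IsTriangle (T : Tripath l q Θ) : Prop := Sol q Θ T.fc T.dc

/-- Variable-niceness witnessed by the elements `x, y, z`. -/
def VariableNiceWith (T : Tripath l q Θ) (x y z : Elem) : Prop :=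
  x ∈ keySet l T.dc ∧ y ∈ keySet l T.ec ∧ z ∈ keySet l T.fc ∧
  ({x, y, z} : Set Elem) ∩ (keySet l T.u0 ∪ keySet l T.u1 ∪ keySet l T.u2) = ∅

/-- The tripath is variable-nice. -/
def VariableNice (T : Tripath l q Θ) : Prop := ∃ x y z, T.VariableNiceWith x y z

/-- The tripath is solution-nice: the only solutions to `q` in `Θ` are those between a
parent block and a child block, plus possibly `(f, d)`. -/
def SolutionNice (T : Tripath l q Θ) : Prop :=
  ∀ a b, Sol q Θ a b →
    (∃ i j, T.parent j = some i ∧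
      ((a = T.aFact i ∧ b = T.bFact j) ∨ (a = T.bFact j ∧ b = T.aFact i)))
    ∨ (a = T.fc ∧ b = T.dc)

/-- The tripath is nice. -/
def Nice (T : Tripath l q Θ) : Prop :=
  (∃ x y z : Elem, T.VariableNiceWith x y z ∧
    ∃ w ∈ ({x, y, z} : Set Elem),
      ∀ c ∈ Θ, c ≠ T.u0 → c ≠ T.u1 → c ≠ T.u2 → w ∈ keySet l c) ∧
  T.SolutionNice ∧
  (∀ u ∈ ({T.u0, T.u1, T.u2} : Set (Fin n → Elem)),
    ∃ w ∈ keySet l u, ∀ c ∈ Θ, c ≠ u → w ∉ keySet l c)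

end Tripath

/-- `D` contains a tripath of `q`: some subset of `D` is a tripath of `q`. -/
def ContainsTripath (l : ℕ) (q : Query n Var) (D : Set (Fin n → Elem)) : Prop :=
  ∃ Θ ⊆ D, Nonempty (Tripath l q Θ)

/-- `q` admits a fork-tripath (over databases with elements in `Elem`). -/
def AdmitsForkTripath (l : ℕ) (q : Query n Var) (Elem : Type*) : Prop :=
  ∃ D : Set (Fin n → Elem), D.Finite ∧ ∃ Θ ⊆ D, ∃ T : Tripath l q Θ, T.IsFork

/-- `q` admits a triangle-tripath (over databases with elements in `Elem`). -/
def AdmitsTriangleTripath (l : ℕ) (q : Query n Var) (Elem : Type*) : Prop :=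
  ∃ D : Set (Fin n → Elem), D.Finite ∧ ∃ Θ ⊆ D, ∃ T : Tripath l q Θ, T.IsTriangle

/-- `q` admits a tripath (over databases with elements in `Elem`). -/
def AdmitsTripath (l : ℕ) (q : Query n Var) (Elem : Type*) : Prop :=
  ∃ D : Set (Fin n → Elem), D.Finite ∧ ContainsTripath l q D

/-- Edges of the solution graph `G(D,q)`: distinct facts `a, b` of `D` with `D ⊨ q{ab}`. -/
def gEdge (q : Query n Var) (D : Set (Fin n → Elem)) (a b : Fin n → Elem) : Prop :=
  a ≠ b ∧ a ∈ D ∧ b ∈ D ∧ SolSym q D a b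

/-- The connected component of the fact `a` in the solution graph `G(D,q)`. -/
def gComp (q : Query n Var) (D : Set (Fin n → Elem)) (a : Fin n → Elem) :
    Set (Fin n → Elem) :=
  {b ∈ D | Relation.ReflTransGen (gEdge q D) a b}

/-- `C` is a quasi-clique (of the solution graph of `D`): any two non-key-equal facts of
`C` are joined by an edge. -/
def QuasiClique (l : ℕ) (q : Query n Var) (D : Set (Fin n → Elem))
    (C : Set (Fin n → Elem)) : Prop :=
  ∀ a ∈ C, ∀ b ∈ C, ¬ keyEq l a b → SolSym q D a b

open Classical in
/-- `clique(a)`: the connected component of `a` in `G(D,q)` if it is a quasi-clique, and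
`{a}` otherwise. -/
noncomputable def cliqueOf (l : ℕ) (q : Query n Var) (D : Set (Fin n → Elem))
    (a : Fin n → Elem) : Set (Fin n → Elem) :=
  if QuasiClique l q D (gComp q D a) then gComp q D a else {a}

/-- Edges of the bipartite graph `H(D,q)`: between a block `B` of `D` and a set `c` of
the form `clique(y)`, when `B` contains a fact `a ∈ c` with `(a,a)` not a solution. -/
def HEdge (l : ℕ) (q : Query n Var) (D : Set (Fin n → Elem))
    (B c : Set (Fin n → Elem)) : Prop :=
  (∃ x ∈ D, B = Block l D x) ∧ (∃ y ∈ D, c = cliqueOf l q D y) ∧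
  ∃ a ∈ B, a ∈ c ∧ ¬ Sol q D a a

/-- `H(D,q)` admits a matching saturating the set `V₁` of blocks of `D`: an injective
assignment of an `H`-edge to every block. -/
def SaturatingMatching (l : ℕ) (q : Query n Var) (D : Set (Fin n → Elem)) : Prop :=
  ∃ M : Set (Fin n → Elem) → Set (Fin n → Elem),
    (∀ x ∈ D, HEdge l q D (Block l D x) (M (Block l D x))) ∧
    (∀ x ∈ D, ∀ y ∈ D, M (Block l D x) = M (Block l D y) → Block l D x = Block l D y)

/-- `D` is a clique-database for `q`: every connected component of `G(D,q)` is a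
quasi-clique. -/
def CliqueDB (l : ℕ) (q : Query n Var) (D : Set (Fin n → Elem)) : Prop :=
  ∀ a ∈ D, QuasiClique l q D (gComp q D a)

/-- `q` is a clique-query: every database (over `Elem`) is a clique-database for `q`. -/
def CliqueQuery (l : ℕ) (q : Query n Var) (Elem : Type*) : Prop :=
  ∀ D : Set (Fin n → Elem), D.Finite → CliqueDB l q D

/-- One step of `q`-connectedness between (the blocks of) two facts of `D`:
either they are in the same block, or some fact of the block of `x` and some fact
of the block of `y` form a solution. -/
def qConnRel (l : ℕ) (q : Query n Var) (D : Set (Fin n → Elem))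
    (x y : Fin n → Elem) : Prop :=
  keyEq l x y ∨ ∃ a b, a ∈ Block l D x ∧ b ∈ Block l D y ∧ SolSym q D a b

/-- The blocks of `x` and of `y` are `q`-connected in `D`
(reflexive-symmetric-transitive closure). -/
def qConn (l : ℕ) (q : Query n Var) (D : Set (Fin n → Elem))
    (x y : Fin n → Elem) : Prop :=
  Relation.EqvGen (qConnRel l q D) x y

/-- The `q`-connected component of (the block of) the fact `x` in `D`. -/
def qComponent (l : ℕ) (q : Query n Var) (D : Set (Fin n → Elem))
    (x : Fin n → Elem) : Set (Fin n → Elem) :=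
  {y ∈ D | qConn l q D x y}

end CQA

/-! In a clique-database two facts that are not key-equal form a solution (in either order)
exactly when they lie in the same connected component of `G(D,q)`, and `clique(a)` is the
component of `a`. So a repair falsifies `q` iff none of its facts is a self-solution and its facts
lie in pairwise distinct components, i.e. iff sending each block to the component of its repair
fact is a matching of `H(D,q)` saturating the blocks. Conversely, a saturating matching marks in
every block a fact lying in the matched component, and any repair made of marked facts falsifies
`q`. -/

namespace CQA

variable {n l : ℕ} {Elem Var : Type*} {q : Query n Var} {D r S : Set (Fin n → Elem)}
  {a b c x y : Fin n → Elem}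

theorem keyEq.refl (a : Fin n → Elem) : keyEq l a a := fun _ _ => rfl

theorem keyEq.symm (h : keyEq l a b) : keyEq l b a := fun i hi => (h i hi).symm

theorem keyEq.trans (hab : keyEq l a b) (hbc : keyEq l b c) : keyEq l a c :=
  fun i hi => (hab i hi).trans (hbc i hi)

theorem block_eq_of_keyEq (h : keyEq l x y) : Block l D x = Block l D y := by
  ext
  exact and_congr_right fun _ => ⟨h.symm.trans, h.trans⟩

theorem keyEq_of_block_eq (hy : y ∈ D) (h : Block l D x = Block l D y) : keyEq l x y := by
  have hy' : y ∈ Block l D y := ⟨hy, keyEq.refl y⟩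
  exact (h ▸ hy').2

theorem Sol.of_subset (h : Sol q D a b) (ha : a ∈ r) (hb : b ∈ r) : Sol q r a b :=
  ⟨ha, hb, h.2.2⟩

theorem Repair.exists_mem_keyEq (hr : Repair l D r) (hx : x ∈ D) : ∃ a ∈ r, keyEq l x a := by
  by_contra! h
  have hcons : Consistent l (insert x r) := by
    rintro a (rfl | ha) b (rfl | hb) hab
    · rfl
    · exact absurd hab (h b hb)
    · exact absurd hab.symm (h a ha)
    · exact hr.2.1 a ha b hb hab
  have hxr := hr.2.2 _ (Set.subset_insert x r) (Set.insert_subset hx hr.1) hcons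
  exact h x (hxr ▸ Set.mem_insert x r) (keyEq.refl x)

theorem Repair.block_inter_eq (hr : Repair l D r) (ha : a ∈ r) : Block l D a ∩ r = {a} :=
  Set.eq_singleton_iff_unique_mem.2
    ⟨⟨⟨hr.1 ha, keyEq.refl a⟩, ha⟩, fun b hb => (hr.2.1 a ha b hb.2 hb.1.2).symm⟩

theorem repair_of_forall_exists_keyEq (hrD : r ⊆ D) (hr : Consistent l r)
    (hmeet : ∀ x ∈ D, ∃ a ∈ r, keyEq l x a) : Repair l D r := by
  refine ⟨hrD, hr, fun s hrs hsD hs => (Set.Subset.antisymm hrs fun b hb => ?_).symm⟩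
  obtain ⟨a, har, hba⟩ := hmeet b (hsD hb)
  exact hs b hb a (hrs har) hba ▸ har

/-- The fact picked in the block of `x` depends only on the block, so picked facts that are
key-equal coincide. -/
theorem exists_repair_subset (hSD : S ⊆ D) (hS : ∀ x ∈ D, ∃ a ∈ S, keyEq l x a) :
    ∃ r ⊆ S, Repair l D r := by
  have hne : ∀ x ∈ D, (Block l D x ∩ S).Nonempty := fun x hx =>
    let ⟨a, haS, hxa⟩ := hS x hx
    ⟨a, ⟨hSD haS, hxa⟩, haS⟩
  let pick : D → Fin n → Elem := fun x => (hne x x.2).some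
  have pick_mem : ∀ x : D, pick x ∈ Block l D x ∩ S := fun x => (hne x x.2).some_mem
  have pick_eq : ∀ x y : D, Block l D x = Block l D y → pick x = pick y := by
    intro x y hxy
    simp only [pick, hxy]
  refine ⟨Set.range pick, Set.range_subset_iff.2 fun x => (pick_mem x).2,
    repair_of_forall_exists_keyEq (Set.range_subset_iff.2 fun x => (pick_mem x).1.1) ?_
      fun x hx => ⟨pick ⟨x, hx⟩, ⟨_, rfl⟩, (pick_mem ⟨x, hx⟩).1.2⟩⟩
  rintro _ ⟨x, rfl⟩ _ ⟨y, rfl⟩ hxy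
  apply pick_eq
  exact block_eq_of_keyEq (((pick_mem x).1.2.trans hxy).trans (pick_mem y).1.2.symm)

instance : Std.Symm (gEdge q D) :=
  ⟨fun _ _ h => ⟨h.1.symm, h.2.2.1, h.2.1, h.2.2.2.symm⟩⟩

theorem mem_gComp_self (ha : a ∈ D) : a ∈ gComp q D a :=
  ⟨ha, Relation.ReflTransGen.refl⟩

theorem gComp_eq_of_mem (hb : b ∈ gComp q D a) : gComp q D a = gComp q D b := by
  have hab : Relation.ReflTransGen (gEdge q D) a b := hb.2
  ext
  exact and_congr_right fun _ => ⟨(symm hab).trans, hab.trans⟩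

namespace CliqueDB

theorem cliqueOf_eq (hc : CliqueDB l q D) (ha : a ∈ D) : cliqueOf l q D a = gComp q D a :=
  if_pos (hc a ha)

theorem solSym_iff_gComp_eq (hc : CliqueDB l q D) (ha : a ∈ D) (hb : b ∈ D)
    (hab : ¬ keyEq l a b) : SolSym q D a b ↔ gComp q D a = gComp q D b := by
  constructor
  · intro h
    have hne : a ≠ b := fun h' => hab (h' ▸ keyEq.refl a)
    exact gComp_eq_of_mem ⟨hb, .single ⟨hne, ha, hb, h⟩⟩
  · intro h
    exact hc a ha a (mem_gComp_self ha) b (h ▸ mem_gComp_self hb) hab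

theorem not_sat_iff (hc : CliqueDB l q D) (hrD : r ⊆ D) (hr : Consistent l r) :
    ¬ Sat q r ↔ (∀ a ∈ r, ¬ Sol q D a a) ∧ Set.InjOn (gComp q D) r := by
  constructor
  · intro hns
    refine ⟨fun a ha haa => hns ⟨a, a, haa.of_subset ha ha⟩, fun a ha b hb hab => ?_⟩
    by_contra hne
    have hk : ¬ keyEq l a b := fun hk => hne (hr a ha b hb hk)
    rcases (hc.solSym_iff_gComp_eq (hrD ha) (hrD hb) hk).2 hab with h | h
    · exact hns ⟨a, b, h.of_subset ha hb⟩
    · exact hns ⟨b, a, h.of_subset hb ha⟩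
  · rintro ⟨hself, hinj⟩ ⟨a, b, ha, hb, hab⟩
    by_cases heq : a = b
    · subst heq
      exact hself a ha ⟨hrD ha, hrD ha, hab⟩
    have hk : ¬ keyEq l a b := fun hk => heq (hr a ha b hb hk)
    have hsol : SolSym q D a b := Or.inl ⟨hrD ha, hrD hb, hab⟩
    exact heq (hinj ha hb ((hc.solSym_iff_gComp_eq (hrD ha) (hrD hb) hk).1 hsol))

theorem exists_repair_not_sat_of_saturatingMatching (hc : CliqueDB l q D)
    (hM : SaturatingMatching l q D) : ∃ r, Repair l D r ∧ ¬ Sat q r := by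
  obtain ⟨M, hedge, hinj⟩ := hM
  set S := {a ∈ D | a ∈ M (Block l D a) ∧ ¬ Sol q D a a}
  have hSD : S ⊆ D := fun a ha => ha.1
  have hmeet : ∀ x ∈ D, ∃ a ∈ S, keyEq l x a := by
    intro x hx
    obtain ⟨-, -, a, ⟨haD, hxa⟩, haM, haa⟩ := hedge x hx
    rw [block_eq_of_keyEq hxa] at haM
    exact ⟨a, ⟨haD, haM, haa⟩, hxa⟩
  have hMcomp : ∀ a ∈ S, M (Block l D a) = gComp q D a := by
    rintro a ⟨haD, haM, -⟩
    obtain ⟨-, ⟨y, hy, hMy⟩, -⟩ := hedge a haD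
    rw [hMy, hc.cliqueOf_eq hy] at haM ⊢
    exact gComp_eq_of_mem haM
  obtain ⟨r, hrS, hr⟩ := exists_repair_subset hSD hmeet
  refine ⟨r, hr, (hc.not_sat_iff hr.1 hr.2.1).2 ⟨fun a ha => (hrS ha).2.2, ?_⟩⟩
  intro a ha b hb hab
  rw [← hMcomp a (hrS ha), ← hMcomp b (hrS hb)] at hab
  have hblock := hinj a (hSD (hrS ha)) b (hSD (hrS hb)) hab
  exact hr.2.1 a ha b hb (keyEq_of_block_eq (hSD (hrS hb)) hblock)

theorem saturatingMatching_of_repair_not_sat (hc : CliqueDB l q D) (hr : Repair l D r)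
    (hns : ¬ Sat q r) : SaturatingMatching l q D := by
  obtain ⟨hself, hinj⟩ := (hc.not_sat_iff hr.1 hr.2.1).1 hns
  let M : Set (Fin n → Elem) → Set (Fin n → Elem) := fun B => ⋃ b ∈ B ∩ r, gComp q D b
  have hM : ∀ a ∈ r, M (Block l D a) = gComp q D a := fun a ha => by
    simp only [M]
    rw [hr.block_inter_eq ha, Set.biUnion_singleton]
  refine ⟨M, fun x hx => ?_, fun x hx y hy hxy => ?_⟩
  · obtain ⟨a, ha, hxa⟩ := hr.exists_mem_keyEq hx
    have haD := hr.1 ha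
    rw [block_eq_of_keyEq hxa, hM a ha]
    exact ⟨⟨a, haD, rfl⟩, ⟨a, haD, (hc.cliqueOf_eq haD).symm⟩,
      a, ⟨haD, keyEq.refl a⟩, mem_gComp_self haD, hself a ha⟩
  · obtain ⟨a, ha, hxa⟩ := hr.exists_mem_keyEq hx
    obtain ⟨b, hb, hyb⟩ := hr.exists_mem_keyEq hy
    rw [block_eq_of_keyEq hxa, block_eq_of_keyEq hyb] at hxy ⊢
    rw [hM a ha, hM b hb] at hxy
    rw [hinj ha hb hxy]

theorem saturatingMatching_iff (hc : CliqueDB l q D) :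
    SaturatingMatching l q D ↔ ∃ r, Repair l D r ∧ ¬ Sat q r :=
  ⟨hc.exists_repair_not_sat_of_saturatingMatching,
    fun ⟨_, hr, hns⟩ => hc.saturatingMatching_of_repair_not_sat hr hns⟩

end CliqueDB

end CQA

theorem clique_db_certain_iff_no_matching (n l : ℕ)
    (Elem Var : Type)
    (q : CQA.Query n Var)
    (D : Set (Fin n → Elem)) (hc : CQA.CliqueDB l q D) :
    CQA.Certain l q D ↔ ¬ CQA.SaturatingMatching l q D := by
  rw [hc.saturatingMatching_iff]
  simp only [CQA.Certain, not_exists, not_and, not_not]
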